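/- Let U be a real p×(p−K) matrix with orthonormal columns whose column span equals the null space of M̂^⊤ (i.e., M̂^⊤U = 0 and U^⊤U = I_{p−K}). Then for every γ > 0 and every y ∈ ℝ^p, the feasible GLS estimate satisfies θ̂_γ = (M̂^⊤M̂)⁻¹M̂^⊤y − (M̂^⊤M̂)⁻¹M̂^⊤ E E^⊤ U (U^⊤ Σ̂_γ U)⁻¹ U^⊤ y, where θ̂_γ = (M̂^⊤Σ̂_γ⁻¹M̂)⁻¹M̂^⊤Σ̂_γ⁻¹y. -/

import Mathlib

/-!
Since `Mᵀ U = 0` and the `K + (p - K)` columns of `M` and `U` span `ℝ^p`, the two orthogonal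
projections add up to the identity: `M (Mᵀ M)⁻¹ Mᵀ = 1 - U Uᵀ`. Multiplying the right-hand side
by `Mᵀ Σ⁻¹ M` and substituting this identity, everything cancels down to `Mᵀ Σ⁻¹`. In the
correction, `Mᵀ Σ U = Mᵀ E Eᵀ U` because `Mᵀ U = 0` kills the ridge term `γ I`, and `Σ = E Eᵀ + γ I`
is positive definite, which makes every inverse genuine.
-/

open Matrix

namespace Matrix

variable {m k l R : Type*} [Fintype m] [Fintype k] [Fintype l]

theorem mulVec_injective_of_isUnit_transpose_mul [CommRing R] [DecidableEq k]
    {B : Matrix m k R} (h : IsUnit (Bᵀ * B)) : Function.Injective B.mulVec :=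
  fun x y hxy => mulVec_injective_of_isUnit h (by simp only [← mulVec_mulVec, hxy])

theorem mulVec_surjective_of_injective_of_card_eq [Field R] {B : Matrix m k R}
    (hB : Function.Injective B.mulVec) (hcard : Fintype.card m = Fintype.card k) :
    Function.Surjective B.mulVec :=
  (LinearMap.injective_iff_surjective_of_finrank_eq_finrank (f := B.mulVecLin)
    (by simp [hcard])).mp hB

theorem PosDef.isUnit_transpose_mul_mul_same [DecidableEq k] {S : Matrix m m ℝ} (hS : S.PosDef)
    {B : Matrix m k ℝ} (hB : Function.Injective B.mulVec) : IsUnit (Bᵀ * S * B) := by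
  simpa only [conjTranspose_eq_transpose_of_trivial] using (hS.conjTranspose_mul_mul_same hB).isUnit

variable [DecidableEq m] [DecidableEq k] [DecidableEq l]

theorem projection_add_mul_transpose_eq_one [Field R] {M : Matrix m k R} {U : Matrix m l R}
    (hM : IsUnit (Mᵀ * M)) (hMU : Mᵀ * U = 0) (hUU : Uᵀ * U = 1)
    (hcard : Fintype.card m = Fintype.card k + Fintype.card l) :
    M * (Mᵀ * M)⁻¹ * Mᵀ + U * Uᵀ = 1 := by
  have hUM : Uᵀ * M = 0 := by rw [← transpose_transpose M, ← transpose_mul, hMU, transpose_zero]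
  have hVV : (fromCols M U)ᵀ * fromCols M U = fromBlocks (Mᵀ * M) 0 0 1 := by
    rw [transpose_fromCols, fromRows_mul_fromCols, hMU, hUM, hUU]
  have hV : IsUnit ((fromCols M U)ᵀ * fromCols M U) :=
    hVV ▸ isUnit_fromBlocks_zero₂₁.mpr ⟨hM, isUnit_one⟩
  -- `fromCols M U` is injective between spaces of equal dimension, so it has a right inverse.
  obtain ⟨B, hB⟩ := mulVec_surjective_iff_exists_right_inverse.mp
    (mulVec_surjective_of_injective_of_card_eq (mulVec_injective_of_isUnit_transpose_mul hV)
      (by simp [hcard]))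
  have hMMM : M * (Mᵀ * M)⁻¹ * Mᵀ * M = M := by
    rw [Matrix.mul_assoc _ Mᵀ, Matrix.mul_assoc, nonsing_inv_mul _ ((isUnit_iff_isUnit_det _).mp hM),
      Matrix.mul_one]
  set Q := M * (Mᵀ * M)⁻¹ * Mᵀ + U * Uᵀ - 1
  have hQM : Q * M = 0 := by
    rw [Matrix.sub_mul, Matrix.add_mul, hMMM, Matrix.mul_assoc U, hUM, Matrix.mul_zero, add_zero,
      Matrix.one_mul, sub_self]
  have hQU : Q * U = 0 := by
    rw [Matrix.sub_mul, Matrix.add_mul, Matrix.mul_assoc (M * _), hMU, Matrix.mul_zero, zero_add,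
      Matrix.mul_assoc, hUU, Matrix.mul_one, Matrix.one_mul, sub_self]
  rw [← sub_eq_zero]
  calc Q = Q * (fromCols M U * B) := by rw [hB, Matrix.mul_one]
    _ = 0 := by rw [← Matrix.mul_assoc, mul_fromCols, hQM, hQU, fromCols_zero, Matrix.zero_mul]

/-- `(Mᵀ S⁻¹ M)⁻¹ Mᵀ S⁻¹` and `(Mᵀ M)⁻¹ Mᵀ` are the generalized and the ordinary least-squares
coefficient maps. -/
theorem gls_eq_ols_sub [CommRing R] {M : Matrix m k R} {U : Matrix m l R} {S : Matrix m m R}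
    (hS : IsUnit S) (hG : IsUnit (Mᵀ * S⁻¹ * M)) (hUSU : IsUnit (Uᵀ * S * U))
    (hproj : M * (Mᵀ * M)⁻¹ * Mᵀ + U * Uᵀ = 1) (hMU : Mᵀ * U = 0) :
    (Mᵀ * S⁻¹ * M)⁻¹ * (Mᵀ * S⁻¹)
      = (Mᵀ * M)⁻¹ * Mᵀ - (Mᵀ * M)⁻¹ * Mᵀ * S * U * (Uᵀ * S * U)⁻¹ * Uᵀ := by
  set W := (Uᵀ * S * U)⁻¹
  have hP : M * (Mᵀ * M)⁻¹ * Mᵀ = 1 - U * Uᵀ := eq_sub_of_add_eq hproj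
  have hSS : S⁻¹ * S = 1 := nonsing_inv_mul _ ((isUnit_iff_isUnit_det _).mp hS)
  have hUW : Uᵀ * S * U * W = 1 := mul_nonsing_inv _ ((isUnit_iff_isUnit_det _).mp hUSU)
  suffices h : Mᵀ * S⁻¹ * M * ((Mᵀ * M)⁻¹ * Mᵀ - (Mᵀ * M)⁻¹ * Mᵀ * S * U * W * Uᵀ)
      = Mᵀ * S⁻¹ by
    rw [← nonsing_inv_mul_cancel_left _ (_ - _) ((isUnit_iff_isUnit_det _).mp hG), h]
  calc Mᵀ * S⁻¹ * M * ((Mᵀ * M)⁻¹ * Mᵀ - (Mᵀ * M)⁻¹ * Mᵀ * S * U * W * Uᵀ)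
      = Mᵀ * S⁻¹ * (M * (Mᵀ * M)⁻¹ * Mᵀ) * (1 - S * U * W * Uᵀ) := by
        simp only [Matrix.mul_sub, Matrix.mul_one, Matrix.mul_assoc]
    _ = Mᵀ * S⁻¹ - Mᵀ * S⁻¹ * U * Uᵀ - Mᵀ * (S⁻¹ * S) * U * W * Uᵀ
          + Mᵀ * S⁻¹ * U * (Uᵀ * S * U * W) * Uᵀ := by
        rw [hP]
        simp only [Matrix.mul_sub, Matrix.sub_mul, Matrix.mul_one, Matrix.mul_assoc]
        abel
    _ = Mᵀ * S⁻¹ := by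
        rw [hSS, hUW, Matrix.mul_one, Matrix.mul_one, hMU, Matrix.zero_mul, Matrix.zero_mul]
        abel

end Matrix

theorem stmt_17_general (p n K : ℕ) (hKn : K ≤ n) (hnp : n < p)
    (X : Matrix (Fin p) (Fin n) ℝ) (A : Matrix (Fin n) (Fin K) ℝ)
    (hX : IsUnit (Xᵀ * X)) (hA : IsUnit (Aᵀ * A))
    (M : Matrix (Fin p) (Fin K) ℝ) (hM : M = X * A * (Aᵀ * A)⁻¹)
    (E : Matrix (Fin p) (Fin (n - K)) ℝ)
    (S : Matrix (Fin p) (Fin p) ℝ) (hS : S = E * Eᵀ)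
    (Sg : ℝ → Matrix (Fin p) (Fin p) ℝ)
    (hSg : ∀ γ : ℝ, Sg γ = S + γ • (1 : Matrix (Fin p) (Fin p) ℝ))
    (U : Matrix (Fin p) (Fin (p - K)) ℝ)
    (hMU : Mᵀ * U = 0) (hUU : Uᵀ * U = 1) :
    ∀ (γ : ℝ), 0 < γ → ∀ (y : Fin p → ℝ),
      ((Mᵀ * (Sg γ)⁻¹ * M)⁻¹ * (Mᵀ * (Sg γ)⁻¹)).mulVec y
        = ((Mᵀ * M)⁻¹ * Mᵀ).mulVec y
          - ((Mᵀ * M)⁻¹ * Mᵀ * E * Eᵀ * U * (Uᵀ * Sg γ * U)⁻¹ * Uᵀ).mulVec y := by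
  intro γ hγ y
  have hMinj : Function.Injective M.mulVec := by
    have hMvec : M.mulVec = X.mulVec ∘ A.mulVec ∘ (Aᵀ * A)⁻¹.mulVec :=
      funext fun v => by simp only [hM, Function.comp_apply, mulVec_mulVec, Matrix.mul_assoc]
    rw [hMvec]
    exact (mulVec_injective_of_isUnit_transpose_mul hX).comp
      ((mulVec_injective_of_isUnit_transpose_mul hA).comp
        (mulVec_injective_of_isUnit ((isUnit_nonsing_inv_iff).mpr hA)))
  have hUinj : Function.Injective U.mulVec :=
    mulVec_injective_of_isUnit_transpose_mul (hUU ▸ isUnit_one)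
  have hSgpd : (Sg γ).PosDef := by
    rw [hSg, hS, ← conjTranspose_eq_transpose_of_trivial]
    exact PosDef.posSemidef_add (posSemidef_self_mul_conjTranspose E) (PosDef.one.smul hγ)
  have hproj : M * (Mᵀ * M)⁻¹ * Mᵀ + U * Uᵀ = 1 :=
    projection_add_mul_transpose_eq_one
      (by simpa using PosDef.one.isUnit_transpose_mul_mul_same hMinj) hMU hUU
      (by simp only [Fintype.card_fin]; omega)
  have hcorr : (Mᵀ * M)⁻¹ * Mᵀ * Sg γ * U = (Mᵀ * M)⁻¹ * Mᵀ * E * Eᵀ * U := by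
    rw [hSg, hS, Matrix.mul_add, Matrix.add_mul, Matrix.mul_smul, Matrix.mul_one, Matrix.smul_mul,
      Matrix.mul_assoc _ Mᵀ U, hMU, Matrix.mul_zero, smul_zero, add_zero, Matrix.mul_assoc _ E]
  rw [gls_eq_ols_sub hSgpd.isUnit (hSgpd.inv.isUnit_transpose_mul_mul_same hMinj)
    (hSgpd.isUnit_transpose_mul_mul_same hUinj) hproj hMU, hcorr, sub_mulVec]

/-- With `U` an orthonormal basis of the null space of `M̂ᵀ`, the feasible GLS
estimate satisfies
`θ̂_γ = (M̂ᵀM̂)⁻¹M̂ᵀy − (M̂ᵀM̂)⁻¹M̂ᵀ E Eᵀ U (Uᵀ Σ̂_γ U)⁻¹ Uᵀ y`. -/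
theorem stmt_17 (p n K : ℕ) (hK : 0 < K) (hKn : K ≤ n) (hnp : n < p)
    (X : Matrix (Fin p) (Fin n) ℝ) (A : Matrix (Fin n) (Fin K) ℝ)
    (hX : IsUnit (Xᵀ * X)) (hA : IsUnit (Aᵀ * A))
    (M : Matrix (Fin p) (Fin K) ℝ) (hM : M = X * A * (Aᵀ * A)⁻¹)
    (N : Matrix (Fin n) (Fin (n - K)) ℝ)
    (hN1 : Nᵀ * N = 1) (hN2 : N * Nᵀ = 1 - A * (Aᵀ * A)⁻¹ * Aᵀ)
    (E : Matrix (Fin p) (Fin (n - K)) ℝ) (hE : E = X * N)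
    (S : Matrix (Fin p) (Fin p) ℝ) (hS : S = E * Eᵀ)
    (Sg : ℝ → Matrix (Fin p) (Fin p) ℝ)
    (hSg : ∀ γ : ℝ, Sg γ = S + γ • (1 : Matrix (Fin p) (Fin p) ℝ))
    (U : Matrix (Fin p) (Fin (p - K)) ℝ)
    (hMU : Mᵀ * U = 0) (hUU : Uᵀ * U = 1) :
    ∀ (γ : ℝ), 0 < γ → ∀ (y : Fin p → ℝ),
      ((Mᵀ * (Sg γ)⁻¹ * M)⁻¹ * (Mᵀ * (Sg γ)⁻¹)).mulVec y
        = ((Mᵀ * M)⁻¹ * Mᵀ).mulVec y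
          - ((Mᵀ * M)⁻¹ * Mᵀ * E * Eᵀ * U * (Uᵀ * Sg γ * U)⁻¹ * Uᵀ).mulVec y :=
  stmt_17_general p n K hKn hnp X A hX hA M hM E S hS Sg hSg U hMU hUU
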